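/- For any n×n matrix A over a commutative semiring S, the semiring Cayley–Hamilton identity holds: Aⁿ + Σ_{1≤k≤n, k even} A^{n−k}·tr(Λ⁺_k(A)) + Σ_{1≤k≤n, k odd} A^{n−k}·tr(Λ⁻_k(A)) = Σ_{1≤k≤n, k even} A^{n−k}·tr(Λ⁻_k(A)) + Σ_{1≤k≤n, k odd} A^{n−k}·tr(Λ⁺_k(A)). -/

import Mathlib

open scoped Classical

noncomputable section

/-- Positive part of the bideterminant: sum over even permutations. -/
def detp {S : Type*} [CommSemiring S] {k : ℕ} (A : Matrix (Fin k) (Fin k) S) : S :=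
  ∑ σ ∈ Finset.univ.filter (fun σ : Equiv.Perm (Fin k) => Equiv.Perm.sign σ = 1),
    ∏ i, A i (σ i)

/-- Negative part of the bideterminant: sum over odd permutations. -/
def detm {S : Type*} [CommSemiring S] {k : ℕ} (A : Matrix (Fin k) (Fin k) S) : S :=
  ∑ σ ∈ Finset.univ.filter (fun σ : Equiv.Perm (Fin k) => Equiv.Perm.sign σ = -1),
    ∏ i, A i (σ i)

/-- The submatrix `A[I|J]` of `A` for `k`-element subsets `I, J` of the index set,
with rows and columns taken in increasing order. -/
def subm {S : Type*} {n k : ℕ} (A : Matrix (Fin n) (Fin n) S)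
    (I J : {s : Finset (Fin n) // s.card = k}) : Matrix (Fin k) (Fin k) S :=
  fun a b => A (I.1.orderIsoOfFin I.2 a) (J.1.orderIsoOfFin J.2 b)

/-- The positive `k`-th compound matrix `Λ⁺_k(A)`. -/
def compP {S : Type*} [CommSemiring S] {n : ℕ} (k : ℕ) (A : Matrix (Fin n) (Fin n) S) :
    Matrix {s : Finset (Fin n) // s.card = k} {s : Finset (Fin n) // s.card = k} S :=
  fun I J => detp (subm A I J)

/-- The negative `k`-th compound matrix `Λ⁻_k(A)`. -/
def compM {S : Type*} [CommSemiring S] {n : ℕ} (k : ℕ) (A : Matrix (Fin n) (Fin n) S) :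
    Matrix {s : Finset (Fin n) // s.card = k} {s : Finset (Fin n) // s.card = k} S :=
  fun I J => detm (subm A I J)

/-!
Over a commutative ring `|B|⁺ - |B|⁻ = det B`, so the two sides differ by
`∑ₖ (-1)ᵏ Eₖ(A) Aⁿ⁻ᵏ`, where `Eₖ` is the sum of the principal `k × k` minors; this is
`χ_A(A)`, which vanishes by Cayley–Hamilton. Both sides are polynomials with natural
coefficients in the entries of `A` and commute with semiring homomorphisms. Hence the identity
holds for the generic matrix over `ℕ[xᵢⱼ]`, which embeds into `ℤ[xᵢⱼ]`, and specializes from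
there to every matrix over a commutative semiring.
-/

open Finset Polynomial

def straubingLhs {S : Type*} [CommSemiring S] {n : ℕ} (A : Matrix (Fin n) (Fin n) S) :
    Matrix (Fin n) (Fin n) S :=
  A ^ n
    + ∑ k ∈ (Icc 1 n).filter (fun k => Even k), Matrix.trace (compP k A) • A ^ (n - k)
    + ∑ k ∈ (Icc 1 n).filter (fun k => ¬ Even k), Matrix.trace (compM k A) • A ^ (n - k)

def straubingRhs {S : Type*} [CommSemiring S] {n : ℕ} (A : Matrix (Fin n) (Fin n) S) :
    Matrix (Fin n) (Fin n) S :=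
  ∑ k ∈ (Icc 1 n).filter (fun k => Even k), Matrix.trace (compM k A) • A ^ (n - k)
    + ∑ k ∈ (Icc 1 n).filter (fun k => ¬ Even k), Matrix.trace (compP k A) • A ^ (n - k)

theorem detp_eq_detp_one {S : Type*} [CommSemiring S] {k : ℕ} (B : Matrix (Fin k) (Fin k) S) :
    detp B = B.detp 1 :=
  rfl

theorem detm_eq_detp_neg_one {S : Type*} [CommSemiring S] {k : ℕ}
    (B : Matrix (Fin k) (Fin k) S) :
    detm B = B.detp (-1) :=
  rfl

section CommRing

variable {R : Type*} [CommRing R]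

def sumPrincipalMinors {m : Type*} [Fintype m] [DecidableEq m] (k : ℕ) (A : Matrix m m R) : R :=
  ∑ s ∈ univ.powersetCard k, (A.submatrix (Subtype.val : s → m) Subtype.val).det

theorem sumPrincipalMinors_zero {m : Type*} [Fintype m] [DecidableEq m] (A : Matrix m m R) :
    sumPrincipalMinors 0 A = 1 := by
  simp [sumPrincipalMinors]

theorem sum_range_sumPrincipalMinors_smul_pow_eq_zero {m : Type*} [Fintype m] [DecidableEq m]
    (A : Matrix m m R) :
    ∑ k ∈ range (Fintype.card m + 1),
      ((-1) ^ k * sumPrincipalMinors k A) • A ^ (Fintype.card m - k) = 0 := by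
  nontriviality R
  rw [← A.aeval_self_charpoly, aeval_eq_sum_range' (n := Fintype.card m + 1) (by simp)]
  conv_rhs => rw [← sum_range_reflect]
  refine sum_congr rfl fun k hk => ?_
  rw [add_tsub_cancel_right,
    A.charpoly_coeff_eq_sum_minors k (Nat.lt_succ_iff.mp (mem_range.mp hk)), sumPrincipalMinors]

theorem det_subm_self {n k : ℕ} (A : Matrix (Fin n) (Fin n) R)
    (I : {s : Finset (Fin n) // s.card = k}) :
    (subm A I I).det = (A.submatrix (Subtype.val : I.1 → Fin n) Subtype.val).det :=
  Matrix.det_submatrix_equiv_self (I.1.orderIsoOfFin I.2).toEquiv (A.submatrix _ _)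

theorem trace_compP_sub_trace_compM {n : ℕ} (k : ℕ) (A : Matrix (Fin n) (Fin n) R) :
    Matrix.trace (compP k A) - Matrix.trace (compM k A) = sumPrincipalMinors k A := by
  simp only [Matrix.trace, Matrix.diag, compP, compM, ← sum_sub_distrib, detp_eq_detp_one,
    detm_eq_detp_neg_one, ← Matrix.det_eq_detp_sub_detp, det_subm_self]
  exact (sum_subtype (univ.powersetCard k) (fun s => by simp [mem_powersetCard])
    fun s : Finset (Fin n) => (A.submatrix (Subtype.val : s → Fin n) Subtype.val).det).symm

theorem sum_neg_one_pow_smul_sub {G : Type*} [AddCommGroup G] [Module R G] (t : Finset ℕ)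
    (p q : ℕ → G) :
    ∑ k ∈ t, (-1 : R) ^ k • (p k - q k) =
      (∑ k ∈ t.filter (fun k => Even k), p k + ∑ k ∈ t.filter (fun k => ¬ Even k), q k)
        - (∑ k ∈ t.filter (fun k => Even k), q k + ∑ k ∈ t.filter (fun k => ¬ Even k), p k) := by
  rw [← sum_filter_add_sum_filter_not t (fun k => Even k)]
  have hEven : ∀ k ∈ t.filter (fun k => Even k), (-1 : R) ^ k • (p k - q k) = p k - q k :=
    fun k hk => by rw [(mem_filter.mp hk).2.neg_one_pow, one_smul]
  have hOdd : ∀ k ∈ t.filter (fun k => ¬ Even k), (-1 : R) ^ k • (p k - q k) = -(p k - q k) :=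
    fun k hk => by rw [(Nat.not_even_iff_odd.mp (mem_filter.mp hk).2).neg_one_pow, neg_one_smul]
  rw [sum_congr rfl hEven, sum_congr rfl hOdd, sum_neg_distrib, sum_sub_distrib, sum_sub_distrib]
  abel

theorem straubingLhs_eq_straubingRhs_of_commRing {n : ℕ} (A : Matrix (Fin n) (Fin n) R) :
    straubingLhs A = straubingRhs A := by
  have hCH := sum_range_sumPrincipalMinors_smul_pow_eq_zero A
  have hrange : range (n + 1) = insert 0 (Icc 1 n) := by
    rw [Nat.range_succ_eq_Icc_zero, ← insert_Icc_add_one_left_eq_Icc n.zero_le, zero_add]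
  rw [Fintype.card_fin, hrange, sum_insert (by simp), pow_zero, one_mul, sumPrincipalMinors_zero,
    one_smul, tsub_zero] at hCH
  simp only [← trace_compP_sub_trace_compM, mul_smul, sub_smul, sum_neg_one_pow_smul_sub] at hCH
  rw [← sub_eq_zero, ← hCH, straubingLhs, straubingRhs]
  abel

end CommRing

section Map

variable {R S : Type*} [CommSemiring R] [CommSemiring S] (f : R →+* S)

theorem compP_map {n : ℕ} (k : ℕ) (A : Matrix (Fin n) (Fin n) R) :
    compP k (A.map f) = (compP k A).map f := by
  ext I J
  exact Matrix.detp_map _ (subm A I J) f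

theorem compM_map {n : ℕ} (k : ℕ) (A : Matrix (Fin n) (Fin n) R) :
    compM k (A.map f) = (compM k A).map f := by
  ext I J
  exact Matrix.detp_map _ (subm A I J) f

theorem map_sum_smul_pow {m : Type*} [Fintype m] [DecidableEq m] (A : Matrix m m R)
    (t : Finset ℕ) (c : ℕ → R) (e : ℕ → ℕ) :
    (∑ k ∈ t, c k • A ^ e k).map f = ∑ k ∈ t, f (c k) • A.map f ^ e k := by
  rw [← f.mapMatrix_apply, map_sum]
  refine sum_congr rfl fun k _ => ?_
  rw [f.mapMatrix_apply, Matrix.map_smul' _ _ _ (map_mul f), ← f.mapMatrix_apply, map_pow]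
  rfl

theorem straubingLhs_map {n : ℕ} (A : Matrix (Fin n) (Fin n) R) :
    (straubingLhs A).map f = straubingLhs (A.map f) := by
  rw [straubingLhs, straubingLhs, ← f.mapMatrix_apply, map_add, map_add, map_pow]
  simp only [RingHom.mapMatrix_apply, map_sum_smul_pow, AddMonoidHom.map_trace, compP_map,
    compM_map]

theorem straubingRhs_map {n : ℕ} (A : Matrix (Fin n) (Fin n) R) :
    (straubingRhs A).map f = straubingRhs (A.map f) := by
  rw [straubingRhs, straubingRhs, ← f.mapMatrix_apply, map_add]
  simp only [RingHom.mapMatrix_apply, map_sum_smul_pow, AddMonoidHom.map_trace, compP_map,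
    compM_map]

end Map

theorem straubingLhs_mvPolynomialX_eq_straubingRhs (n : ℕ) :
    straubingLhs (Matrix.mvPolynomialX (Fin n) (Fin n) ℕ) =
      straubingRhs (Matrix.mvPolynomialX (Fin n) (Fin n) ℕ) := by
  let ι : MvPolynomial (Fin n × Fin n) ℕ →+* MvPolynomial (Fin n × Fin n) ℤ :=
    MvPolynomial.map (Nat.castRingHom ℤ)
  apply Matrix.map_injective (f := ι) (MvPolynomial.map_injective _ Nat.cast_injective)
  dsimp only
  rw [straubingLhs_map, straubingRhs_map]
  exact straubingLhs_eq_straubingRhs_of_commRing _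

/-- Straubing's semiring Cayley–Hamilton identity. -/
theorem cayley_hamilton_semiring {S : Type*} [CommSemiring S] {n : ℕ}
    (A : Matrix (Fin n) (Fin n) S) :
    A ^ n
      + ∑ k ∈ (Finset.Icc 1 n).filter (fun k => Even k),
          Matrix.trace (compP k A) • A ^ (n - k)
      + ∑ k ∈ (Finset.Icc 1 n).filter (fun k => ¬ Even k),
          Matrix.trace (compM k A) • A ^ (n - k)
    = ∑ k ∈ (Finset.Icc 1 n).filter (fun k => Even k),
          Matrix.trace (compM k A) • A ^ (n - k)
      + ∑ k ∈ (Finset.Icc 1 n).filter (fun k => ¬ Even k),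
          Matrix.trace (compP k A) • A ^ (n - k) := by
  let φ := MvPolynomial.eval₂Hom (Nat.castRingHom S) fun p : Fin n × Fin n => A p.1 p.2
  have hA : (Matrix.mvPolynomialX (Fin n) (Fin n) ℕ).map φ = A :=
    Matrix.mvPolynomialX_map_eval₂ _ A
  have h := congrArg (Matrix.map · φ) (straubingLhs_mvPolynomialX_eq_straubingRhs n)
  rwa [straubingLhs_map, straubingRhs_map, hA] at h
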